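/- arXiv:2505.01434 — 3 statements merged into one kernel-verified Lean document; each statement's English description precedes it below -/
import Mathlib

section
/- The class of controllable languages with respect to a fixed prefix-closed plant L(G) is closed under arbitrary union: if each K_i (i ∈ I) satisfies K̄_i·E_uc ∩ L(G) ⊆ K̄_i, then K = ⋃_i K_i satisfies K̄·E_uc ∩ L(G) ⊆ K̄. -/
/-- Prefix closure of a language. -/
def pref {α : Type*} (L : Set (List α)) : Set (List α) := {w | ∃ v ∈ L, w <+: v}

/-- `K · E_uc`: words of `K` followed by one uncontrollable event. -/
def catUc {α : Type*} (K : Set (List α)) (Euc : Set α) : Set (List α) :=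
  {w | ∃ s ∈ K, ∃ u ∈ Euc, w = s ++ [u]}

theorem pref_iUnion {α ι : Type*} (K : ι → Set (List α)) :
    pref (⋃ i, K i) = ⋃ i, pref (K i) := by
  ext w
  simp only [pref, Set.mem_iUnion, Set.mem_ofPred_eq]
  constructor
  · rintro ⟨v, ⟨i, hv⟩, hwv⟩
    exact ⟨i, v, hv, hwv⟩
  · rintro ⟨i, v, hv, hwv⟩
    exact ⟨v, ⟨i, hv⟩, hwv⟩

theorem catUc_iUnion {α ι : Type*} (K : ι → Set (List α)) (Euc : Set α) :
    catUc (⋃ i, K i) Euc = ⋃ i, catUc (K i) Euc := by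
  ext w
  simp only [catUc, Set.mem_iUnion, Set.mem_ofPred_eq]
  constructor
  · rintro ⟨s, ⟨i, hs⟩, u, hu, rfl⟩
    exact ⟨i, s, hs, u, hu, rfl⟩
  · rintro ⟨i, s, hs, u, hu, rfl⟩
    exact ⟨s, ⟨i, hs⟩, u, hu, rfl⟩

def Controllable {α : Type*} (Euc : Set α) (LG K : Set (List α)) : Prop :=
  catUc (pref K) Euc ∩ LG ⊆ pref K

theorem Controllable.iUnion {α ι : Type*} {Euc : Set α} {LG : Set (List α)}
    {K : ι → Set (List α)} (hK : ∀ i, Controllable Euc LG (K i)) :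
    Controllable Euc LG (⋃ i, K i) := by
  unfold Controllable
  rw [pref_iUnion, catUc_iUnion, Set.iUnion_inter]
  exact Set.iUnion_mono hK

theorem stmt_8_general {E : Type*} {I : Type*} (Euc : Set E) (LG : Set (List E))
    (K : I → Set (List E))
    (hK : ∀ i, catUc (pref (K i)) Euc ∩ LG ⊆ pref (K i)) :
    catUc (pref (⋃ i, K i)) Euc ∩ LG ⊆ pref (⋃ i, K i) :=
  Controllable.iUnion hK

/-- Controllable languages w.r.t. a fixed prefix-closed plant `L(G)` are closed
under arbitrary union. -/
theorem stmt_8 {E : Type*} {I : Type*} (Euc : Set E) (LG : Set (List E))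
    (hLG : pref LG = LG) (K : I → Set (List E))
    (hK : ∀ i, catUc (pref (K i)) Euc ∩ LG ⊆ pref (K i)) :
    catUc (pref (⋃ i, K i)) Euc ∩ LG ⊆ pref (⋃ i, K i) :=
  stmt_8_general Euc LG K hK
end

section
/- The intersection of two prefix-closed controllable languages need not be controllable, but if additionally K̄1 ∩ K̄2 = (K1 ∩ K2)‾ (i.e., the languages are nonconflicting), then K1 ∩ K2 is controllable with respect to L(G). -/
section Controllability

variable {α : Type*} {Euc : Set α} {A B LG : Set (List α)}

theorem catUc_mono (h : A ⊆ B) : catUc A Euc ⊆ catUc B Euc := by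
  rintro w ⟨s, hs, u, hu, rfl⟩
  exact ⟨s, h hs, u, hu, rfl⟩

theorem catUc_inter_inter_subset (hA : catUc A Euc ∩ LG ⊆ A) (hB : catUc B Euc ∩ LG ⊆ B) :
    catUc (A ∩ B) Euc ∩ LG ⊆ A ∩ B :=
  fun _ ⟨hw, hL⟩ =>
    ⟨hA ⟨catUc_mono Set.inter_subset_left hw, hL⟩, hB ⟨catUc_mono Set.inter_subset_right hw, hL⟩⟩

end Controllability

theorem stmt_9_general {E : Type*} (Euc : Set E) (K1 K2 LG : Set (List E))
    (hc1 : catUc (pref K1) Euc ∩ LG ⊆ pref K1)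
    (hc2 : catUc (pref K2) Euc ∩ LG ⊆ pref K2)
    (hnc : pref (K1 ∩ K2) = pref K1 ∩ pref K2) :
    catUc (pref (K1 ∩ K2)) Euc ∩ LG ⊆ pref (K1 ∩ K2) := by
  rw [hnc]
  exact catUc_inter_inter_subset hc1 hc2

/-- If `K1`, `K2` are prefix-closed, controllable w.r.t. the prefix-closed plant
`L(G)`, and nonconflicting (`pref (K1 ∩ K2) = pref K1 ∩ pref K2`), then `K1 ∩ K2`
is controllable w.r.t. `L(G)`. -/
theorem stmt_9 {E : Type*} (Euc : Set E) (K1 K2 LG : Set (List E))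
    (hLG : pref LG = LG)
    (hK1 : pref K1 = K1) (hK2 : pref K2 = K2)
    (hc1 : catUc (pref K1) Euc ∩ LG ⊆ pref K1)
    (hc2 : catUc (pref K2) Euc ∩ LG ⊆ pref K2)
    (hnc : pref (K1 ∩ K2) = pref K1 ∩ pref K2) :
    catUc (pref (K1 ∩ K2)) Euc ∩ LG ⊆ pref (K1 ∩ K2) :=
  stmt_9_general Euc K1 K2 LG hc1 hc2 hnc
end

section
/- The desired language K_{D,1} = pref((w1(x + y))^*) — where w1, x, y are fixed words — is a subset of the prefix closure of its own marked core, and is recognized by a deterministic finite automaton with at most |w1| + |x| + |y| + 1 states. -/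
open scoped Computability

/-- Extension of a partial transition function to words. -/
def run {Q α : Type*} (f : Q → α → Option Q) : Q → List α → Option Q
  | q, [] => some q
  | q, x :: xs => (f q x).bind (fun q' => run f q' xs)

/-- The marked core `{w1·x, w1·y}^*` of the desired language `K_{D,1}`. -/
def core {E : Type*} (w1 x y : List E) : Language E :=
  ({w1 ++ x, w1 ++ y} : Language E)∗

/-!
If no word of `G` is a proper prefix of another, `pref (G∗)` is generated by the trie of `G`
with every complete word folded back onto the root: the states are `[]` and the proper
prefixes of words of `G`, a letter extends the current prefix, and completing a word of `G`
returns to the root. Prefix-freeness guarantees that a completed word is never itself a state,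
so reading a word of `G` from the root always ends back at the root. For `G = {w1·x, w1·y}`
the two branches share only the prefixes of `w1`, so there are at most `|w1| + |x| + |y|`
states.
-/

section Run

variable {Q α : Type*} (f : Q → α → Option Q)

theorem run_append (q : Q) (u v : List α) :
    run f q (u ++ v) = (run f q u).bind (fun q' => run f q' v) := by
  induction u generalizing q with
  | nil => rfl
  | cons a u ih =>
    simp only [List.cons_append, run]
    cases f q a <;> simp [ih]

theorem run_singleton (q : Q) (a : α) : run f q [a] = f q a := by
  simp [run]

theorem run_map_equiv {Q' : Type*} (e : Q ≃ Q') (q : Q) (w : List α) :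
    run (fun q' a => (f (e.symm q') a).map e) (e q) w = (run f q w).map e := by
  induction w generalizing q with
  | nil => rfl
  | cons a w ih =>
    simp only [run, Equiv.symm_apply_apply]
    cases f q a <;> simp [ih]

end Run

namespace Language

variable {E : Type*}

def IsPrefixFree (G : Language E) : Prop :=
  ∀ g ∈ G, ∀ h ∈ G, g <+: h → g = h

theorem append_mem_kstar {G : Language E} {u g : List E} (hu : u ∈ G∗) (hg : g ∈ G) :
    u ++ g ∈ G∗ := by
  obtain ⟨L, rfl, hL⟩ := mem_kstar.mp hu
  refine mem_kstar.mpr ⟨L ++ [g], by simp, fun z hz => ?_⟩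
  rcases List.mem_append.mp hz with hz | hz
  · exact hL z hz
  · rwa [List.mem_singleton.mp hz]

variable (G : Language E)

def trieStates : Set (List E) :=
  insert [] {p | ∃ g ∈ G, p <+: g ∧ p.length < g.length}

def trieRoot : trieStates G := ⟨[], Set.mem_insert _ _⟩

open Classical in
noncomputable def trieStep (p : trieStates G) (a : E) : Option (trieStates G) :=
  if h : p.1 ++ [a] ∈ trieStates G then some ⟨p.1 ++ [a], h⟩
  else if p.1 ++ [a] ∈ G then some (trieRoot G) else none

variable {G}

theorem val_eq_or_eq_trieRoot_of_trieStep_eq_some {p q : trieStates G} {a : E} (h : trieStep G p a = some q) :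
    q.1 = p.1 ++ [a] ∨ (q = trieRoot G ∧ p.1 ++ [a] ∈ G) := by
  unfold trieStep at h
  split_ifs at h with h₁ h₂ <;> cases h
  · exact Or.inl rfl
  · exact Or.inr ⟨rfl, h₂⟩

theorem exists_eq_append_of_run_trieRoot {w : List E} {q : trieStates G}
    (h : run (trieStep G) (trieRoot G) w = some q) : ∃ u ∈ G∗, w = u ++ q.1 := by
  induction w using List.reverseRecOn generalizing q with
  | nil =>
    cases h
    exact ⟨[], nil_mem_kstar G, rfl⟩
  | append_singleton w a ih =>
    rw [run_append] at h
    obtain ⟨p, hp, hpq⟩ := Option.bind_eq_some_iff.mp h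
    rw [run_singleton] at hpq
    obtain ⟨u, hu, rfl⟩ := ih hp
    rcases val_eq_or_eq_trieRoot_of_trieStep_eq_some hpq with hq | ⟨rfl, hG⟩
    · exact ⟨u, hu, by simp [hq]⟩
    · exact ⟨u ++ (p.1 ++ [a]), append_mem_kstar hu hG, by simp [trieRoot]⟩

theorem run_trieStep_eq_trieRoot (hG : G.IsPrefixFree) (s : List E) (p : trieStates G)
    (hps : p.1 ++ s ∈ G) : run (trieStep G) p s = some (trieRoot G) := by
  induction s generalizing p with
  | nil =>
    rw [List.append_nil] at hps
    obtain hp | ⟨g, hg, hpg, hlt⟩ := p.2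
    · exact congrArg some (Subtype.ext hp)
    · exact (hlt.ne (congrArg List.length (hG _ hps g hg hpg))).elim
  | cons a s ih =>
    by_cases hstate : p.1 ++ [a] ∈ trieStates G
    · simp only [run, trieStep, dif_pos hstate, Option.bind_some]
      exact ih ⟨_, hstate⟩ (by simpa using hps)
    · have hs : s = [] := by
        by_contra hs
        exact hstate (Or.inr ⟨_, hps, ⟨s, by simp⟩, by simpa using List.length_pos_iff.mpr hs⟩)
      subst hs
      simp only [run, trieStep, dif_neg hstate, if_pos hps, Option.bind_some]

theorem run_trieRoot_of_mem_kstar (hG : G.IsPrefixFree) {v : List E} (hv : v ∈ G∗) :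
    run (trieStep G) (trieRoot G) v = some (trieRoot G) := by
  obtain ⟨L, rfl, hL⟩ := mem_kstar.mp hv
  clear hv
  induction L with
  | nil => rfl
  | cons g L ih =>
    rw [List.flatten_cons, run_append,
      run_trieStep_eq_trieRoot hG g (trieRoot G) (hL g List.mem_cons_self), Option.bind_some]
    exact ih (fun z hz => hL z (List.mem_cons_of_mem g hz))

theorem setOf_run_trieStep_isSome (hG : G.IsPrefixFree) :
    {w | (run (trieStep G) (trieRoot G) w).isSome} = pref (G∗ : Language E) := by
  ext w
  constructor
  · intro hw
    obtain ⟨q, hq⟩ := Option.isSome_iff_exists.mp hw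
    obtain ⟨u, hu, rfl⟩ := exists_eq_append_of_run_trieRoot hq
    obtain hq | ⟨g, hg, ⟨t, rfl⟩, -⟩ := q.2
    · exact ⟨u, hu, by simp [hq]⟩
    · exact ⟨u ++ (q.1 ++ t), append_mem_kstar hu hg, t, by simp⟩
  · rintro ⟨v, hv, t, rfl⟩
    have := run_trieRoot_of_mem_kstar hG hv
    rw [run_append] at this
    obtain ⟨q, hq, -⟩ := Option.bind_eq_some_iff.mp this
    simp [hq]

end Language

open Language

section TwoBranches

variable {E : Type*} {w1 x y : List E}

theorem isPrefixFree_pair (hx : x ≠ []) (hy : y ≠ [])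
    (htree : ∀ p : List E, w1.length < p.length →
      p <+: w1 ++ x → p <+: w1 ++ y → False) :
    ({w1 ++ x, w1 ++ y} : Language E).IsPrefixFree := by
  have hxl : w1.length < (w1 ++ x).length := by simpa using List.length_pos_iff.mpr hx
  have hyl : w1.length < (w1 ++ y).length := by simpa using List.length_pos_iff.mpr hy
  rintro g (rfl | rfl) h (rfl | rfl) hgh
  · rfl
  · exact (htree _ hxl List.prefix_rfl hgh).elim
  · exact (htree _ hyl hgh List.prefix_rfl).elim
  · rfl

theorem exists_finset_trieStates_pair (hx : x ≠ []) :
    ∃ S : Finset (List E), trieStates ({w1 ++ x, w1 ++ y} : Language E) ⊆ S ∧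
      S.card ≤ w1.length + x.length + y.length := by
  classical
  refine ⟨(Finset.range (w1 ++ x).length).image (fun k => (w1 ++ x).take k) ∪
    (Finset.range y.length).image (fun k => (w1 ++ y).take (w1.length + k)), ?_, ?_⟩
  · have hxl : w1.length < (w1 ++ x).length := by simpa using List.length_pos_iff.mpr hx
    have of_prefix_x : ∀ p, p <+: w1 ++ x → p.length < (w1 ++ x).length →
        p ∈ (Finset.range (w1 ++ x).length).image (fun k => (w1 ++ x).take k) := fun p hp hl =>
      Finset.mem_image.mpr ⟨p.length, Finset.mem_range.mpr hl, (List.prefix_iff_eq_take.mp hp).symm⟩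
    intro p hp
    simp only [Finset.mem_coe, Finset.mem_union]
    obtain rfl | ⟨g, rfl | rfl, hpg, hl⟩ := hp
    · exact Or.inl (of_prefix_x [] List.nil_prefix (by simp only [List.length_nil]; omega))
    · exact Or.inl (of_prefix_x p hpg hl)
    · by_cases hw : p.length ≤ w1.length
      · have hpw : p <+: w1 := List.prefix_of_prefix_length_le hpg (List.prefix_append _ _) hw
        exact Or.inl (of_prefix_x p (hpw.trans (List.prefix_append _ _)) (by omega))
      · refine Or.inr (Finset.mem_image.mpr ⟨p.length - w1.length, ?_, ?_⟩)
        · simp only [List.length_append, Finset.mem_range] at hl ⊢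
          omega
        · rw [Nat.add_sub_of_le (by omega), ← List.prefix_iff_eq_take.mp hpg]
  · calc _ ≤ _ + _ := Finset.card_union_le _ _
      _ ≤ (w1 ++ x).length + y.length :=
        add_le_add (Finset.card_image_le.trans (Finset.card_range _).le)
          (Finset.card_image_le.trans (Finset.card_range _).le)
      _ = _ := by simp

end TwoBranches

theorem stmt_17_general {E : Type*} (w1 x y : List E)
    (hx : x ≠ []) (hy : y ≠ [])
    (htree : ∀ p : List E, w1.length < p.length →
      p <+: w1 ++ x → p <+: w1 ++ y → False) :
    pref (core w1 x y) ⊆ pref (core w1 x y) ∧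
      ∃ (Q : Type) (_ : Fintype Q) (f : Q → E → Option Q) (q0 : Q),
        Fintype.card Q ≤ w1.length + x.length + y.length + 1 ∧
          {w : List E | (run f q0 w).isSome} = pref (core w1 x y) := by
  refine ⟨subset_rfl, ?_⟩
  obtain ⟨S, hGS, hcard⟩ := exists_finset_trieStates_pair (w1 := w1) (y := y) hx
  set G : Language E := {w1 ++ x, w1 ++ y}
  have : Finite (trieStates G) := (S.finite_toSet.subset hGS).to_subtype
  let e := Finite.equivFin (trieStates G)
  refine ⟨Fin (Nat.card (trieStates G)), inferInstance,
    fun q a => (trieStep G (e.symm q) a).map e, e (trieRoot G), ?_, ?_⟩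
  · rw [Fintype.card_fin, Nat.card_coe_set_eq]
    have hle := Set.ncard_le_ncard hGS
    rw [Set.ncard_coe_finset] at hle
    omega
  · simp only [run_map_equiv, Option.isSome_map]
    exact setOf_run_trieStep_isSome (isPrefixFree_pair hx hy htree)

/-- `K_{D,1} = pref((w1(x+y))^*)` is contained in the prefix closure of its marked
core, and (when the two branches only share the prefix `w1`) it is generated by a
deterministic automaton with at most `|w1| + |x| + |y| + 1` states. -/
theorem stmt_17 {E : Type*} (w1 x y : List E)
    (hw1 : w1 ≠ []) (hx : x ≠ []) (hy : y ≠ [])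
    (hhead : x.head? ≠ y.head?)
    (htree : ∀ p : List E, w1.length < p.length →
      p <+: w1 ++ x → p <+: w1 ++ y → False) :
    pref (core w1 x y) ⊆ pref (core w1 x y) ∧
      ∃ (Q : Type) (_ : Fintype Q) (f : Q → E → Option Q) (q0 : Q),
        Fintype.card Q ≤ w1.length + x.length + y.length + 1 ∧
          {w : List E | (run f q0 w).isSome} = pref (core w1 x y) :=
  stmt_17_general w1 x y hx hy htree
end
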